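/- Fix r ≥ 1. For every r-core γ and every n ∈ ℕ, the sum over all partitions λ reachable from γ by adding n r-ribbons of the square of the spin-generating polynomial F^{λ/γ}(q) = Σ_T q^{2·spin(T)} (sum over standard r-ribbon tableaux T of shape λ/γ) equals n!·((1−q^r)/(1−q))^n. -/

import Mathlib

open scoped Classical

/-- A doubly infinite bit sequence: a function `ℤ → ℕ` with all values `≤ 1`. -/
def IsBitSeq (s : ℤ → ℕ) : Prop := ∀ i, s i ≤ 1

/-- The quadruple `(w (i-r), t (i-r), s i, w i)` equals `(1,0,0,1)`:
the strip `t/s` with witness `w` has an `r`-ribbon at position `i`. -/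
def Quad (r : ℕ) (s t w : ℤ → ℕ) (i : ℤ) : Prop :=
  w (i - r) = 1 ∧ t (i - r) = 0 ∧ s i = 0 ∧ w i = 1

/-- `w` is a witness for `t/s` being a horizontal `r`-ribbon strip: for every `i`, the
quadruple `(w (i-r), t (i-r), s i, w i)` is of the form `(a,a,b,b)` or equals `(1,0,0,1)`,
the latter happening only finitely often. -/
def IsWitness (r : ℕ) (s t w : ℤ → ℕ) : Prop :=
  (∀ i : ℤ, (w (i - r) = t (i - r) ∧ s i = w i) ∨ Quad r s t w i) ∧
    {i : ℤ | Quad r s t w i}.Finite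

/-- `t/s` is a horizontal `r`-ribbon strip (`s ≤ʰᵣ t`). -/
def HStrip (r : ℕ) (s t : ℤ → ℕ) : Prop := ∃ w, IsWitness r s t w

/-- The height `∑_{j=1}^{r-1} w (i - j)` of a ribbon at position `i` read off from `w`. -/
def hgtAt (r : ℕ) (w : ℤ → ℕ) (i : ℤ) : ℕ := ∑ j ∈ Finset.Ico 1 r, w (i - (j : ℤ))

/-- A partition: a weakly decreasing, eventually zero function `ℕ → ℕ`. -/
def IsPartition (f : ℕ → ℕ) : Prop :=
  (∀ i j : ℕ, i ≤ j → f j ≤ f i) ∧ ∃ N : ℕ, ∀ n : ℕ, N ≤ n → f n = 0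

/-- The edge sequence of a partition: bit `1` exactly at the positions `f j - j - 1`
(for `j : ℕ`); it is eventually `1` to the left and `0` to the right, and adding a
square on diagonal `k` replaces the substring `10` at positions `(k-1, k)` by `01`. -/
noncomputable def edgeSeq (f : ℕ → ℕ) (k : ℤ) : ℕ :=
  if ∃ j : ℕ, (f j : ℤ) - (j : ℤ) - 1 = k then 1 else 0

/-- `t` is obtained from `s` by adding one `r`-ribbon with head on diagonal `p`:
the two sequences differ exactly at positions `p - r` and `p`, where the bits
`(1,0)` of `s` become `(0,1)` in `t`. -/
def EdgeFlip (r : ℕ) (s t : ℤ → ℕ) (p : ℤ) : Prop :=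
  s (p - r) = 1 ∧ s p = 0 ∧ t (p - r) = 0 ∧ t p = 1 ∧
    ∀ j : ℤ, j ≠ p - r → j ≠ p → s j = t j

/-- The height of the single `r`-ribbon added in the step from `s` to `t`. -/
noncomputable def stepHeight (r : ℕ) (s t : ℤ → ℕ) : ℕ :=
  if h : ∃ k : ℤ, EdgeFlip r s t k then hgtAt r s h.choose else 0

/-- The total height (twice the spin) of a standard `r`-ribbon tableau, i.e. of a
saturated chain of `r`-ribbon additions. -/
noncomputable def totH (r n : ℕ) (c : Fin (n + 1) → ℕ → ℕ) : ℕ :=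
  ∑ i : Fin n, stepHeight r (edgeSeq (c i.castSucc)) (edgeSeq (c i.succ))

/-- `c` is a standard `r`-ribbon tableau starting at `γ`: a saturated chain of `n`
`r`-ribbon additions. -/
def IsSRT (r n : ℕ) (γ : ℕ → ℕ) (c : Fin (n + 1) → ℕ → ℕ) : Prop :=
  c 0 = γ ∧ (∀ i, IsPartition (c i)) ∧
    ∀ i : Fin n, ∃ k : ℤ, EdgeFlip r (edgeSeq (c i.castSucc)) (edgeSeq (c i.succ)) k

/-!
Encode a partition by its edge sequence, a Maya diagram of beads on `ℤ`. Adding an `r`-ribbon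
with head on diagonal `p` moves a bead from `p - r` to the empty position `p`, and the height of
the ribbon is the number of beads strictly between. On the free `ℕ[X]`-module spanned by Maya
diagrams let `U` add an `r`-ribbon and `D` remove one, each weighted by `X ^ height`. They are
adjoint for the pairing in which Maya diagrams are orthonormal, and `D U = U D + [r]_{X²}`: moves
at positions `p`, `q` with `|p - q| ≠ r` commute with the same total height either way, and the
remaining diagonal terms telescope along a sliding window of `r` positions. An `r`-core `γ` has
no removable ribbon, so `D γ = 0` and `⟨Uⁿ γ, Uⁿ γ⟩ = n! [r]_{X²}ⁿ`. Expanding `Uⁿ γ` over chains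
of ribbon additions, i.e. standard ribbon tableaux, the left side is the sum of
`X ^ (totH T₁ + totH T₂)` over pairs of tableaux of the same shape; substituting `X² ↦ X` ends the
proof.
-/

open Polynomial Filter Finset
open scoped Nat

section BeadMoves

variable {s : ℤ → ℕ} {a b c d k : ℤ}

def moveBit (s : ℤ → ℕ) (a b : ℤ) : ℤ → ℕ := Function.update (Function.update s a 0) b 1

def Movable (s : ℤ → ℕ) (a b : ℤ) : Prop := s a = 1 ∧ s b = 0

lemma Movable.ne (h : Movable s a b) : a ≠ b := by
  rintro rfl
  exact absurd (h.1.symm.trans h.2) one_ne_zero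

lemma moveBit_apply_left (h : a ≠ b) : moveBit s a b a = 0 := by
  simp [moveBit, h]

lemma moveBit_apply_right : moveBit s a b b = 1 := by
  simp [moveBit]

lemma moveBit_apply_of_ne (ha : k ≠ a) (hb : k ≠ b) : moveBit s a b k = s k := by
  simp [moveBit, ha, hb]

lemma Movable.movable_moveBit (h : Movable s a b) : Movable (moveBit s a b) b a := by
  simp [moveBit, Movable, h.ne]

lemma Movable.moveBit_moveBit (h : Movable s a b) : moveBit (moveBit s a b) b a = s := by
  funext k
  simp only [moveBit, Function.update_apply]
  split_ifs <;> simp_all [Movable]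

lemma moveBit_eq_iff_moveBit_eq {t : ℤ → ℕ} :
    Movable s a b ∧ moveBit s a b = t ↔ Movable t b a ∧ moveBit t b a = s := by
  constructor <;>
  · rintro ⟨h, rfl⟩
    exact ⟨h.movable_moveBit, h.moveBit_moveBit⟩

lemma eq_of_moveBit_eq {a' b' : ℤ} (hb : s b = 0) (hab' : a' ≠ b')
    (heq : moveBit s a b = moveBit s a' b') : b = b' := by
  by_contra hne
  have := congrFun heq b
  rw [moveBit_apply_right] at this
  by_cases hba' : b = a'
  · rw [hba', moveBit_apply_left hab'] at this
    exact one_ne_zero this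
  · rw [moveBit_apply_of_ne hba' hne, hb] at this
    exact one_ne_zero this

lemma moveBit_comm (had : a ≠ d) (hbc : b ≠ c) (hbd : b ≠ d) :
    moveBit (moveBit s a b) c d = moveBit (moveBit s c d) a b := by
  funext k
  simp only [moveBit, Function.update_apply]
  split_ifs <;> omega

lemma moveBit_moveBit_of_eq_zero (hc : s c = 0) :
    moveBit (moveBit s a c) c b = moveBit s a b := by
  funext k
  simp only [moveBit, Function.update_apply]
  split_ifs <;> simp_all

lemma moveBit_moveBit_of_eq_one (hc : s c = 1) (hca : c ≠ a) (hab : a ≠ b) :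
    moveBit (moveBit s c b) a c = moveBit s a b := by
  funext k
  simp only [moveBit, Function.update_apply]
  split_ifs <;> simp_all

lemma movable_moveBit_iff (hca : c ≠ a) (hcb : c ≠ b) (hda : d ≠ a) (hdb : d ≠ b) :
    Movable (moveBit s a b) c d ↔ Movable s c d := by
  rw [Movable, Movable, moveBit_apply_of_ne hca hcb, moveBit_apply_of_ne hda hdb]

lemma hgtAt_eq_sum_Ioo (r : ℕ) (s : ℤ → ℕ) (p : ℤ) :
    hgtAt r s p = ∑ k ∈ Ioo (p - r) p, s k := by
  refine sum_nbij' (fun j => p - j) (fun k => (p - k).toNat) ?_ ?_ ?_ ?_ ?_ <;>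
    intros <;> simp_all <;> omega

lemma hgtAt_moveBit (h : Movable s a b) (r : ℕ) (q : ℤ) :
    hgtAt r (moveBit s a b) q + (if a ∈ Ioo (q - r) q then 1 else 0)
      = hgtAt r s q + (if b ∈ Ioo (q - r) q then 1 else 0) := by
  rw [hgtAt_eq_sum_Ioo, hgtAt_eq_sum_Ioo, ← sum_ite_eq _ a (fun _ => 1),
    ← sum_ite_eq _ b (fun _ => 1), ← sum_add_distrib, ← sum_add_distrib]
  refine sum_congr rfl fun k _ => ?_
  by_cases hka : a = k
  · subst hka
    simp [moveBit, h.1, h.ne, h.ne.symm]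
  by_cases hkb : b = k
  · subst hkb
    simp [moveBit, h.2, hka]
  · simp [moveBit_apply_of_ne (Ne.symm hka) (Ne.symm hkb), hka, hkb]

lemma hgtAt_add_hgtAt_moveBit {r : ℕ} {p q : ℤ} (hp : Movable s (p - r) p)
    (hq : Movable s q (q - r)) :
    hgtAt r s p + hgtAt r (moveBit s (p - r) p) q
      = hgtAt r s q + hgtAt r (moveBit s q (q - r)) p := by
  have h1 := hgtAt_moveBit hp r q
  have h2 := hgtAt_moveBit hq r p
  simp only [mem_Ioo] at h1 h2
  split_ifs at h1 h2 <;> omega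

end BeadMoves

section Telescope

lemma sum_range_add_eq_of_step {M : Type*} [AddCommMonoid M] {a b f : ℕ → M}
    (h : ∀ i, a i + f (i + 1) = b i + f i) (n : ℕ) :
    ∑ i ∈ range n, a i + f n = ∑ i ∈ range n, b i + f 0 := by
  induction n with
  | zero => simp
  | succ n ih =>
    rw [sum_range_succ, sum_range_succ, add_assoc, h, add_left_comm, ih]
    abel

noncomputable def evenGeomSum (n : ℕ) : ℕ[X] := ∑ i ∈ range n, X ^ (2 * i)

def beadsUpTo (r : ℕ) (s : ℤ → ℕ) (p : ℤ) : ℕ := ∑ j ∈ range r, s (p - j)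

variable {r : ℕ} {s : ℤ → ℕ}

lemma beadsUpTo_add_eq_add_beadsUpTo_sub_one (r : ℕ) (s : ℤ → ℕ) (p : ℤ) :
    beadsUpTo r s p + s (p - r) = s p + beadsUpTo r s (p - 1) := by
  rw [beadsUpTo, beadsUpTo, ← sum_range_succ (fun j : ℕ => s (p - j)), sum_range_succ',
    add_comm]
  congr 1
  · simp
  · refine sum_congr rfl fun j _ => ?_
    push_cast
    ring_nf

lemma beadsUpTo_eq_add_hgtAt (hr : 0 < r) (s : ℤ → ℕ) (p : ℤ) :
    beadsUpTo r s p = s p + hgtAt r s p := by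
  rw [beadsUpTo, range_eq_Ico, sum_eq_sum_Ico_succ_bot hr, hgtAt]
  simp

lemma evenGeomSum_beadsUpTo_step (hs : ∀ k, s k ≤ 1) (r : ℕ) (p : ℤ) :
    (if Movable s (p - r) p then X ^ (2 * hgtAt r s p) else 0) + evenGeomSum (beadsUpTo r s p)
      = (if Movable s p (p - r) then X ^ (2 * hgtAt r s p) else 0)
        + evenGeomSum (beadsUpTo r s (p - 1)) := by
  have hslide := beadsUpTo_add_eq_add_beadsUpTo_sub_one r s p
  by_cases hadd : Movable s (p - r) p
  · have hw := beadsUpTo_eq_add_hgtAt (r := r) (by have := hadd.ne; omega) s p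
    obtain ⟨h1, h2⟩ := hadd
    rw [if_pos ⟨h1, h2⟩, if_neg (by rintro ⟨h3, -⟩; omega),
      show beadsUpTo r s (p - 1) = hgtAt r s p + 1 by omega,
      show beadsUpTo r s p = hgtAt r s p by omega, evenGeomSum, evenGeomSum, sum_range_succ,
      zero_add, add_comm]
  by_cases hrem : Movable s p (p - r)
  · have hw := beadsUpTo_eq_add_hgtAt (r := r) (by have := hrem.ne; omega) s p
    obtain ⟨h1, h2⟩ := hrem
    rw [if_neg hadd, if_pos ⟨h1, h2⟩, show beadsUpTo r s p = hgtAt r s p + 1 by omega,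
      show beadsUpTo r s (p - 1) = hgtAt r s p by omega, evenGeomSum, sum_range_succ,
      evenGeomSum, zero_add, add_comm]
  · rw [if_neg hadd, if_neg hrem]
    have := hs p
    have := hs (p - r)
    unfold Movable at hadd hrem
    rw [show beadsUpTo r s p = beadsUpTo r s (p - 1) by omega]

end Telescope

section MayaDiagrams

def IsMayaDiagram (s : ℤ → ℕ) : Prop :=
  (∀ k, s k ≤ 1) ∧ (∀ᶠ k in atBot, s k = 1) ∧ ∀ᶠ k in atTop, s k = 0

variable {s : ℤ → ℕ}

lemma IsMayaDiagram.moveBit (hs : IsMayaDiagram s) (a b : ℤ) : IsMayaDiagram (moveBit s a b) := by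
  obtain ⟨hbit, hbot, htop⟩ := hs
  refine ⟨fun k => ?_, ?_, ?_⟩
  · simp only [_root_.moveBit, Function.update_apply]
    split_ifs <;> simp [hbit k]
  · filter_upwards [hbot, eventually_ne_atBot a, eventually_ne_atBot b] with k hk ha hb
    rwa [moveBit_apply_of_ne ha hb]
  · filter_upwards [htop, eventually_ne_atTop a, eventually_ne_atTop b] with k hk ha hb
    rwa [moveBit_apply_of_ne ha hb]

lemma IsMayaDiagram.exists_bounds (hs : IsMayaDiagram s) :
    ∃ A B : ℤ, (∀ k < A, s k = 1) ∧ ∀ k, B ≤ k → s k = 0 := by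
  obtain ⟨A, hA⟩ := eventually_atBot.1 hs.2.1
  obtain ⟨B, hB⟩ := eventually_atTop.1 hs.2.2
  exact ⟨A, B, fun k hk => hA k hk.le, hB⟩

lemma Movable.le_and_lt_of_bounds {A B a b : ℤ} (hA : ∀ k < A, s k = 1) (hB : ∀ k, B ≤ k → s k = 0)
    (h : Movable s a b) : A ≤ b ∧ a < B := by
  constructor
  · by_contra! hb
    exact absurd ((hA b hb).symm.trans h.2) one_ne_zero
  · by_contra! ha
    exact absurd ((hB a ha).symm.trans h.1) zero_ne_one

lemma IsMayaDiagram.finite_ribbons (hs : IsMayaDiagram s) (r : ℕ) :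
    {p : ℤ | Movable s (p - r) p ∨ Movable s p (p - r)}.Finite := by
  obtain ⟨A, B, hA, hB⟩ := hs.exists_bounds
  refine (Set.finite_Ico A (B + r)).subset ?_
  rintro p (h | h) <;> have := h.le_and_lt_of_bounds hA hB <;> simp only [Set.mem_Ico] <;> omega

end MayaDiagrams

abbrev MayaDiagram : Type := {s : ℤ → ℕ // IsMayaDiagram s}

namespace MayaDiagram

variable (r : ℕ) (m : MayaDiagram) {p q : ℤ}

def move (a b : ℤ) : MayaDiagram := ⟨moveBit m.1 a b, m.2.moveBit a b⟩

noncomputable def addable : Finset ℤ :=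
  Set.Finite.toFinset (s := {p | Movable m.1 (p - r) p})
    ((m.2.finite_ribbons r).subset fun _ => Or.inl)

noncomputable def removable : Finset ℤ :=
  Set.Finite.toFinset (s := {p | Movable m.1 p (p - r)})
    ((m.2.finite_ribbons r).subset fun _ => Or.inr)

variable {r m}

@[simp]
lemma coe_move (a b : ℤ) : (m.move a b).1 = moveBit m.1 a b := rfl

lemma move_eq_iff {t : MayaDiagram} {a b : ℤ} :
    Movable m.1 a b ∧ m.move a b = t ↔ Movable t.1 b a ∧ t.move b a = m := by
  simp only [move, Subtype.ext_iff]
  exact moveBit_eq_iff_moveBit_eq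

lemma mem_addable : p ∈ m.addable r ↔ Movable m.1 (p - r) p := by
  rw [addable, Set.Finite.mem_toFinset]; exact Iff.rfl

lemma mem_removable : p ∈ m.removable r ↔ Movable m.1 p (p - r) := by
  rw [removable, Set.Finite.mem_toFinset]; exact Iff.rfl

lemma removable_move (hp : Movable m.1 (p - r) p) :
    (m.move (p - r) p).removable r = insert p {q ∈ m.removable r | q ≠ p - r ∧ q ≠ p + r} := by
  ext q
  simp only [mem_insert, mem_filter, mem_removable, coe_move]
  by_cases hqp : q = p
  · simpa [hqp] using hp.movable_moveBit
  have hr : r ≠ 0 := by have := hp.ne; omega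
  by_cases hq1 : q = p - r
  · simp [hq1, hr, Movable, moveBit_apply_left hp.ne]
  by_cases hq2 : q = p + r
  · simp [hq2, hr, Movable, moveBit_apply_right]
  rw [movable_moveBit_iff hq1 hqp (by omega) (by omega)]
  simp [hqp, hq1, hq2]

lemma addable_move (hq : Movable m.1 q (q - r)) :
    (m.move q (q - r)).addable r = insert q {p ∈ m.addable r | p ≠ q - r ∧ p ≠ q + r} := by
  ext p
  simp only [mem_insert, mem_filter, mem_addable, coe_move]
  by_cases hpq : p = q
  · simpa [hpq] using hq.movable_moveBit
  have hr : r ≠ 0 := by have := hq.ne; omega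
  by_cases hp1 : p = q - r
  · simp [hp1, hr, Movable, moveBit_apply_right]
  by_cases hp2 : p = q + r
  · simp [hp2, hr, Movable, moveBit_apply_left hq.ne]
  rw [movable_moveBit_iff (by omega) (by omega) hpq hp1]
  simp [hpq, hp1, hp2]

-- Both sides telescope against `evenGeomSum` of the number of beads in the window `(p - r, p]`,
-- which is `r` far to the left and `0` far to the right.
lemma sum_addable_eq_sum_removable_add (r : ℕ) (m : MayaDiagram) :
    ∑ p ∈ m.addable r, X ^ (2 * hgtAt r m.1 p)
      = ∑ p ∈ m.removable r, X ^ (2 * hgtAt r m.1 p) + evenGeomSum r := by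
  obtain ⟨A, B, hA, hB⟩ := m.2.exists_bounds
  set W := (range (B + r - A).toNat).image fun i : ℕ => A + i
  have hW : ∀ p, Movable m.1 (p - r) p ∨ Movable m.1 p (p - r) → p ∈ W := by
    rintro p (h | h) <;> have := h.le_and_lt_of_bounds hA hB <;>
      exact mem_image.2 ⟨(p - A).toNat, mem_range.2 (by omega), by omega⟩
  have hadd : m.addable r = W.filter fun p => Movable m.1 (p - r) p := by
    ext p
    simpa [MayaDiagram.mem_addable] using fun h => hW p (Or.inl h)
  have hrem : m.removable r = W.filter fun p => Movable m.1 p (p - r) := by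
    ext p
    simpa [MayaDiagram.mem_removable] using fun h => hW p (Or.inr h)
  have hinj : Set.InjOn (fun i : ℕ => A + i) (range (B + r - A).toNat) := by
    intro i _ j _ h
    simpa using h
  rw [hadd, hrem, sum_filter, sum_filter, sum_image hinj, sum_image hinj]
  have key := sum_range_add_eq_of_step
    (a := fun i : ℕ => if Movable m.1 (A + i - r) (A + i) then X ^ (2 * hgtAt r m.1 (A + i)) else 0)
    (b := fun i : ℕ => if Movable m.1 (A + i) (A + i - r) then X ^ (2 * hgtAt r m.1 (A + i)) else 0)
    (f := fun i : ℕ => evenGeomSum (beadsUpTo r m.1 (A + i - 1)))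
    (fun i => by
      rw [Nat.cast_succ, ← add_assoc, add_sub_cancel_right]
      exact evenGeomSum_beadsUpTo_step m.2.1 r (A + i))
    (B + r - A).toNat
  have htop : beadsUpTo r m.1 (A + (B + r - A).toNat - 1) = 0 :=
    sum_eq_zero fun j hj => hB _ (by simp at hj; omega)
  have hbot : beadsUpTo r m.1 (A + (0 : ℕ) - 1) = r := by
    rw [beadsUpTo, sum_congr rfl fun j _ => hA _ (by omega)]
    simp
  rw [htop, hbot, evenGeomSum, range_zero, sum_empty, add_zero] at key
  exact key

end MayaDiagram

section EdgeSequences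

variable {f : ℕ → ℕ} {s : ℤ → ℕ} {a b k : ℤ}

lemma edgeSeq_eq_one_iff : edgeSeq f k = 1 ↔ ∃ j, (f j : ℤ) - j - 1 = k := by
  unfold edgeSeq
  split_ifs with h <;> simp [h]

lemma edgeSeq_eq_zero_iff : edgeSeq f k = 0 ↔ ∀ j, (f j : ℤ) - j - 1 ≠ k := by
  unfold edgeSeq
  split_ifs with h <;> simpa using h

lemma IsPartition.strictAnti (hf : IsPartition f) : StrictAnti fun j => (f j : ℤ) - j - 1 :=
  strictAnti_nat_of_succ_lt fun j => by
    have := hf.1 j (j + 1) (by omega)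
    push_cast
    omega

lemma IsPartition.isMayaDiagram_edgeSeq (hf : IsPartition f) : IsMayaDiagram (edgeSeq f) := by
  obtain ⟨N, hN⟩ := hf.2
  refine ⟨fun k => by unfold edgeSeq; split_ifs <;> simp, ?_, ?_⟩
  · refine eventually_atBot.2 ⟨-N - 1, fun k hk => edgeSeq_eq_one_iff.2 ⟨(-k - 1).toNat, ?_⟩⟩
    rw [hN _ (by omega)]
    omega
  · refine eventually_atTop.2 ⟨f 0, fun k hk => edgeSeq_eq_zero_iff.2 fun j => ?_⟩
    have := hf.1 0 j (Nat.zero_le j)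
    omega

lemma IsPartition.eq_of_edgeSeq_eq {g : ℕ → ℕ} (hf : IsPartition f) (hg : IsPartition g)
    (h : edgeSeq f = edgeSeq g) : f = g := by
  have hrange :
      Set.range (fun j => (f j : ℤ) - j - 1) = Set.range (fun j => (g j : ℤ) - j - 1) := by
    ext k
    rw [Set.mem_range, Set.mem_range, ← edgeSeq_eq_one_iff, ← edgeSeq_eq_one_iff, h]
  have := (hf.strictAnti.dual_right.range_inj hg.strictAnti.dual_right).1
    (by rw [Set.range_comp, Set.range_comp, hrange])
  funext j
  have := congrFun this j
  simp only [Function.comp_apply, OrderDual.toDual_inj] at this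
  omega

lemma IsPartition.update_add_one (hf : IsPartition f) {i : ℕ}
    (hfree : edgeSeq f ((f i : ℤ) - i) = 0) : IsPartition (Function.update f i (f i + 1)) := by
  refine ⟨fun j l hjl => ?_, ?_⟩
  · simp only [Function.update_apply]
    have := hf.1 j l hjl
    split_ifs with hl hj hj
    · omega
    · subst hl
      have h1 := hf.1 j (l - 1) (by omega)
      have h2 := hf.1 (l - 1) l (by omega)
      have h3 := edgeSeq_eq_zero_iff.1 hfree (l - 1)
      push_cast [Nat.cast_sub (show 1 ≤ l by omega)] at h3
      omega
    · subst hj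
      omega
    · exact this
  · obtain ⟨N, hN⟩ := hf.2
    exact ⟨max N (i + 1), fun j hj => by
      rw [Function.update_of_ne (by omega)]
      exact hN j (by omega)⟩

lemma edgeSeq_update_add_one (hf : IsPartition f) (i : ℕ) :
    edgeSeq (Function.update f i (f i + 1))
      = moveBit (edgeSeq f) ((f i : ℤ) - i - 1) (f i - i) := by
  funext k
  by_cases hk1 : k = f i - i
  · rw [hk1, moveBit_apply_right, edgeSeq_eq_one_iff]
    exact ⟨i, by simp; omega⟩
  by_cases hk0 : k = f i - i - 1
  · rw [hk0, moveBit_apply_left (by omega), edgeSeq_eq_zero_iff]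
    intro j
    rcases eq_or_ne j i with rfl | hji
    · simp
    · rw [Function.update_of_ne hji]
      exact hf.strictAnti.injective.ne hji
  rw [moveBit_apply_of_ne hk0 hk1]
  refine if_congr ⟨fun ⟨j, hj⟩ => ⟨j, ?_⟩, fun ⟨j, hj⟩ => ⟨j, ?_⟩⟩ rfl rfl
  · rcases eq_or_ne j i with rfl | hji
    · simp at hj; omega
    · rwa [Function.update_of_ne hji] at hj
  · rcases eq_or_ne j i with rfl | hji
    · omega
    · rwa [Function.update_of_ne hji]

noncomputable def IsPartition.toMayaDiagram (hf : IsPartition f) : MayaDiagram :=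
  ⟨edgeSeq f, hf.isMayaDiagram_edgeSeq⟩

def IsEdgeSeq (s : ℤ → ℕ) : Prop := ∃ f, IsPartition f ∧ edgeSeq f = s

lemma IsEdgeSeq.moveBit_add_one (hs : IsEdgeSeq s) (h : Movable s a (a + 1)) :
    IsEdgeSeq (moveBit s a (a + 1)) := by
  obtain ⟨f, hf, rfl⟩ := hs
  obtain ⟨i, rfl⟩ := edgeSeq_eq_one_iff.1 h.1
  refine ⟨_, hf.update_add_one (by simpa using h.2), ?_⟩
  rw [edgeSeq_update_add_one hf i, sub_add_cancel]

-- Induction on `b - a`, routing the bead through `a + 1`: if that position is empty the bead steps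
-- there first; otherwise the bead at `a + 1` moves on to `b` and the bead at `a` takes its place.
lemma IsEdgeSeq.moveBit (hs : IsEdgeSeq s) (h : Movable s a b) (hab : a < b) :
    IsEdgeSeq (moveBit s a b) := by
  obtain ⟨d, rfl⟩ : ∃ d : ℕ, b = a + 1 + d := ⟨(b - a - 1).toNat, by omega⟩
  clear hab
  induction d generalizing s a with
  | zero => simpa using hs.moveBit_add_one (by simpa using h)
  | succ d ih =>
    have hb : a + 1 + ((d + 1 : ℕ) : ℤ) = a + 1 + 1 + d := by push_cast; ring
    rw [hb] at h ⊢
    have hbit : s (a + 1) ≤ 1 := by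
      obtain ⟨f, hf, rfl⟩ := hs
      exact hf.isMayaDiagram_edgeSeq.1 _
    rcases Nat.le_one_iff_eq_zero_or_eq_one.1 hbit with h0 | h1
    · have := ih (s := moveBit s a (a + 1)) (a := a + 1) (hs.moveBit_add_one ⟨h.1, h0⟩)
        ⟨moveBit_apply_right, by rw [moveBit_apply_of_ne (by omega) (by omega), h.2]⟩
      rwa [moveBit_moveBit_of_eq_zero h0] at this
    · have := (ih (s := s) (a := a + 1) hs ⟨h1, h.2⟩).moveBit_add_one (a := a)
        ⟨by rw [moveBit_apply_of_ne (by omega) (by omega), h.1], moveBit_apply_left (by omega)⟩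
      rwa [moveBit_moveBit_of_eq_one h1 (by omega) (by omega)] at this

noncomputable def toPartition (s : ℤ → ℕ) : ℕ → ℕ := if h : IsEdgeSeq s then h.choose else 0

lemma IsEdgeSeq.toPartition_spec (hs : IsEdgeSeq s) :
    IsPartition (toPartition s) ∧ edgeSeq (toPartition s) = s := by
  rw [toPartition, dif_pos hs]
  exact hs.choose_spec

lemma IsPartition.toPartition_edgeSeq (hf : IsPartition f) : toPartition (edgeSeq f) = f :=
  have h := IsEdgeSeq.toPartition_spec ⟨f, hf, rfl⟩
  h.1.eq_of_edgeSeq_eq hf h.2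

end EdgeSequences

section RibbonChains

variable {r : ℕ} {s t : ℤ → ℕ} {p : ℤ}

lemma edgeFlip_iff : EdgeFlip r s t p ↔ Movable s (p - r) p ∧ t = moveBit s (p - r) p := by
  constructor
  · rintro ⟨h1, h2, h3, h4, h5⟩
    refine ⟨⟨h1, h2⟩, funext fun k => ?_⟩
    have hne : p - r ≠ p := Movable.ne ⟨h1, h2⟩
    by_cases hk1 : k = p - r
    · rw [hk1, h3, moveBit_apply_left hne]
    by_cases hk2 : k = p
    · rw [hk2, h4, moveBit_apply_right]
    · rw [moveBit_apply_of_ne hk1 hk2, h5 k hk1 hk2]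
  · rintro ⟨h, rfl⟩
    exact ⟨h.1, h.2, moveBit_apply_left h.ne, moveBit_apply_right,
      fun j h1 h2 => (moveBit_apply_of_ne h1 h2).symm⟩

lemma stepHeight_moveBit (h : Movable s (p - r) p) :
    stepHeight r s (moveBit s (p - r) p) = hgtAt r s p := by
  have hex : ∃ k, EdgeFlip r s (moveBit s (p - r) p) k := ⟨p, edgeFlip_iff.2 ⟨h, rfl⟩⟩
  obtain ⟨hk, heq⟩ := edgeFlip_iff.1 hex.choose_spec
  rw [stepHeight, dif_pos hex, ← eq_of_moveBit_eq h.2 hk.ne heq]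

noncomputable def ribbonChains (r : ℕ) :
    (n : ℕ) → MayaDiagram → Finset (Fin (n + 1) → MayaDiagram)
  | 0, m => {fun _ => m}
  | n + 1, m => (m.addable r).biUnion fun p =>
      (ribbonChains r n (m.move (p - r) p)).image (Fin.cons m)

noncomputable def chainHeight (r n : ℕ) (σ : Fin (n + 1) → MayaDiagram) : ℕ :=
  ∑ i : Fin n, stepHeight r (σ i.castSucc).1 (σ i.succ).1

noncomputable def chainPairs (r n : ℕ) (m : MayaDiagram) :
    Finset ((Fin (n + 1) → MayaDiagram) × (Fin (n + 1) → MayaDiagram)) :=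
  {x ∈ ribbonChains r n m ×ˢ ribbonChains r n m | x.1 (Fin.last n) = x.2 (Fin.last n)}

lemma chainHeight_cons {n : ℕ} (m : MayaDiagram) (σ : Fin (n + 1) → MayaDiagram) :
    chainHeight r (n + 1) (Fin.cons m σ) = stepHeight r m.1 (σ 0).1 + chainHeight r n σ := by
  rw [chainHeight, Fin.sum_univ_succ]
  simp [chainHeight]

lemma mem_ribbonChains {n : ℕ} {m : MayaDiagram} {σ : Fin (n + 1) → MayaDiagram} :
    σ ∈ ribbonChains r n m ↔
      σ 0 = m ∧ ∀ i : Fin n, ∃ p, EdgeFlip r (σ i.castSucc).1 (σ i.succ).1 p := by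
  induction n generalizing m with
  | zero =>
    simp only [ribbonChains, mem_singleton, IsEmpty.forall_iff, and_true]
    exact ⟨fun h => h ▸ rfl, fun h => funext fun i => Fin.fin_one_eq_zero i ▸ h⟩
  | succ n ih =>
    simp only [ribbonChains, mem_biUnion, mem_image, MayaDiagram.mem_addable]
    constructor
    · rintro ⟨p, hp, τ, hτ, rfl⟩
      obtain ⟨hτ0, hτ⟩ := ih.1 hτ
      refine ⟨rfl, Fin.cases ⟨p, ?_⟩ fun i => ?_⟩
      · simp [hτ0, edgeFlip_iff.2 ⟨hp, rfl⟩]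
      · simpa [← Fin.succ_castSucc] using hτ i
    · rintro ⟨h0, hstep⟩
      obtain ⟨p, hp⟩ := hstep 0
      rw [edgeFlip_iff] at hp
      simp only [Fin.castSucc_zero, h0] at hp
      refine ⟨p, hp.1, Fin.tail σ, ih.2 ⟨Subtype.ext ?_, fun i => ?_⟩, ?_⟩
      · simpa [Fin.tail] using hp.2
      · have := hstep i.succ
        rwa [← Fin.succ_castSucc] at this
      · rw [← h0, Fin.cons_self_tail]

end RibbonChains

section TableauxCorrespondence

variable {r n : ℕ} {γ : ℕ → ℕ}

lemma isEdgeSeq_of_mem_ribbonChains {m : MayaDiagram} {σ : Fin (n + 1) → MayaDiagram}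
    (hm : IsEdgeSeq m.1) (hσ : σ ∈ ribbonChains r n m) (i : Fin (n + 1)) : IsEdgeSeq (σ i).1 := by
  obtain ⟨h0, hstep⟩ := mem_ribbonChains.1 hσ
  induction i using Fin.induction with
  | zero => exact h0 ▸ hm
  | succ i ih =>
    obtain ⟨p, hp⟩ := hstep i
    obtain ⟨hmov, heq⟩ := edgeFlip_iff.1 hp
    rw [heq]
    exact ih.moveBit hmov (by have := hmov.ne; omega)

noncomputable def partitionChain (σ : Fin (n + 1) → MayaDiagram) : Fin (n + 1) → ℕ → ℕ :=
  fun i => toPartition (σ i).1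

lemma partitionChain_spec (hγ : IsPartition γ) {σ : Fin (n + 1) → MayaDiagram}
    (hσ : σ ∈ ribbonChains r n hγ.toMayaDiagram) (i : Fin (n + 1)) :
    IsPartition (partitionChain σ i) ∧ edgeSeq (partitionChain σ i) = (σ i).1 :=
  (isEdgeSeq_of_mem_ribbonChains ⟨γ, hγ, rfl⟩ hσ i).toPartition_spec

lemma partitionChain_injOn (hγ : IsPartition γ) :
    Set.InjOn partitionChain
      (ribbonChains r n hγ.toMayaDiagram : Set (Fin (n + 1) → MayaDiagram)) :=
  fun σ hσ τ hτ h => funext fun i => Subtype.ext <| by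
    rw [← (partitionChain_spec hγ hσ i).2, ← (partitionChain_spec hγ hτ i).2, h]

lemma isSRT_partitionChain (hγ : IsPartition γ) {σ : Fin (n + 1) → MayaDiagram}
    (hσ : σ ∈ ribbonChains r n hγ.toMayaDiagram) :
    IsSRT r n γ (partitionChain σ) ∧ totH r n (partitionChain σ) = chainHeight r n σ := by
  have h := partitionChain_spec hγ hσ
  obtain ⟨h0, hstep⟩ := mem_ribbonChains.1 hσ
  refine ⟨⟨?_, fun i => (h i).1, fun i => ?_⟩, ?_⟩
  · rw [partitionChain, h0]
    exact hγ.toPartition_edgeSeq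
  · simpa only [(h _).2] using hstep i
  · simp only [totH, chainHeight, (h _).2]

lemma exists_partitionChain_eq (hγ : IsPartition γ) {c : Fin (n + 1) → ℕ → ℕ}
    (hc : IsSRT r n γ c) :
    ∃ σ ∈ ribbonChains r n hγ.toMayaDiagram, partitionChain σ = c := by
  obtain ⟨h0, hpart, hstep⟩ := hc
  refine ⟨fun i => ⟨edgeSeq (c i), (hpart i).isMayaDiagram_edgeSeq⟩,
    mem_ribbonChains.2 ⟨Subtype.ext (congrArg edgeSeq h0), hstep⟩,
    funext fun i => (hpart i).toPartition_edgeSeq⟩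

lemma bijOn_partitionChain (hγ : IsPartition γ) :
    Set.BijOn (fun x : (Fin (n + 1) → MayaDiagram) × (Fin (n + 1) → MayaDiagram) =>
        (partitionChain x.1, partitionChain x.2))
      (chainPairs r n hγ.toMayaDiagram : Set _)
      {T | IsSRT r n γ T.1 ∧ IsSRT r n γ T.2 ∧ T.1 (Fin.last n) = T.2 (Fin.last n)} := by
  refine ⟨fun x hx => ?_, fun x hx y hy hxy => ?_, fun ⟨T₁, T₂⟩ hT => ?_⟩
  · simp only [chainPairs, coe_filter, mem_product, Set.mem_ofPred_eq] at hx ⊢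
    exact ⟨(isSRT_partitionChain hγ hx.1.1).1, (isSRT_partitionChain hγ hx.1.2).1,
      by simp [partitionChain, hx.2]⟩
  · simp only [chainPairs, coe_filter, mem_product, Set.mem_ofPred_eq, Prod.mk.injEq] at hx hy hxy
    exact Prod.ext (partitionChain_injOn hγ hx.1.1 hy.1.1 hxy.1)
      (partitionChain_injOn hγ hx.1.2 hy.1.2 hxy.2)
  · obtain ⟨h1, h2, hlast⟩ := hT
    obtain ⟨σ, hσ, rfl⟩ := exists_partitionChain_eq hγ h1
    obtain ⟨τ, hτ, rfl⟩ := exists_partitionChain_eq hγ h2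
    refine ⟨(σ, τ), ?_, rfl⟩
    simp only [chainPairs, coe_filter, mem_product, Set.mem_ofPred_eq]
    refine ⟨⟨hσ, hτ⟩, Subtype.ext ?_⟩
    rw [← (partitionChain_spec hγ hσ _).2, ← (partitionChain_spec hγ hτ _).2]
    exact congrArg edgeSeq hlast

end TableauxCorrespondence

abbrev FockSpace : Type := MayaDiagram →₀ ℕ[X]

namespace FockSpace

open Finsupp

variable (r : ℕ)

noncomputable def raise (m : MayaDiagram) : FockSpace :=
  ∑ p ∈ m.addable r, single (m.move (p - r) p) (X ^ hgtAt r m.1 p)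

noncomputable def lower (m : MayaDiagram) : FockSpace :=
  ∑ p ∈ m.removable r, single (m.move p (p - r)) (X ^ hgtAt r m.1 p)

noncomputable def U : FockSpace →ₗ[ℕ[X]] FockSpace := linearCombination ℕ[X] (raise r)

noncomputable def D : FockSpace →ₗ[ℕ[X]] FockSpace := linearCombination ℕ[X] (lower r)

noncomputable def pairing : FockSpace →ₗ[ℕ[X]] FockSpace →ₗ[ℕ[X]] ℕ[X] :=
  lsum ℕ[X] fun m => (LinearMap.mul ℕ[X] ℕ[X]).compl₂ (lapply m)

noncomputable def addThenRemove (m : MayaDiagram) (p q : ℤ) : FockSpace :=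
  single ((m.move (p - r) p).move q (q - r))
    (X ^ (hgtAt r m.1 p + hgtAt r (moveBit m.1 (p - r) p) q))

noncomputable def removeThenAdd (m : MayaDiagram) (q p : ℤ) : FockSpace :=
  single ((m.move q (q - r)).move (p - r) p)
    (X ^ (hgtAt r m.1 q + hgtAt r (moveBit m.1 q (q - r)) p))

variable {r}

lemma U_single (m : MayaDiagram) (c : ℕ[X]) : U r (single m c) = c • raise r m :=
  linearCombination_single _ _ _

lemma D_single (m : MayaDiagram) (c : ℕ[X]) : D r (single m c) = c • lower r m :=
  linearCombination_single _ _ _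

lemma pairing_single_left (m : MayaDiagram) (c : ℕ[X]) (w : FockSpace) :
    pairing (single m c) w = c * w m := by
  simp [pairing]

lemma pairing_single_right (v : FockSpace) (t : MayaDiagram) (d : ℕ[X]) :
    pairing v (single t d) = d * v t := by
  induction v using induction_linear with
  | zero => simp
  | add v w hv hw => simp [hv, hw, mul_add]
  | single m c =>
    rw [pairing_single_left]
    by_cases h : m = t
    · simp [h, mul_comm]
    · simp [single_eq_of_ne h, single_eq_of_ne (Ne.symm h)]

lemma raise_apply (m t : MayaDiagram) :
    raise r m t = ∑ p ∈ m.addable r with m.move (p - r) p = t, X ^ hgtAt r m.1 p := by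
  simp [raise, finsetSum_apply, single_apply, sum_filter]

lemma lower_apply (t m : MayaDiagram) :
    lower r t m = ∑ p ∈ t.removable r with t.move p (p - r) = m, X ^ hgtAt r t.1 p := by
  simp [lower, finsetSum_apply, single_apply, sum_filter]

lemma raise_apply_eq_lower_apply (m t : MayaDiagram) : raise r m t = lower r t m := by
  have hfilter : {p ∈ m.addable r | m.move (p - r) p = t}
      = {p ∈ t.removable r | t.move p (p - r) = m} := by
    ext p
    simp only [mem_filter, MayaDiagram.mem_addable, MayaDiagram.mem_removable]
    exact MayaDiagram.move_eq_iff
  rw [raise_apply, lower_apply, hfilter]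
  refine sum_congr rfl fun p hp => ?_
  obtain ⟨hrem, rfl⟩ := mem_filter.1 hp
  rw [MayaDiagram.coe_move]
  congr 1
  simpa using hgtAt_moveBit (MayaDiagram.mem_removable.1 hrem) r p

lemma pairing_U (v w : FockSpace) : pairing (U r v) w = pairing v (D r w) := by
  induction v using induction_linear with
  | zero => simp
  | add v₁ v₂ h₁ h₂ => simp [h₁, h₂]
  | single m c =>
    induction w using induction_linear with
    | zero => simp
    | add w₁ w₂ h₁ h₂ => simp [h₁, h₂]
    | single t d =>
      rw [U_single, D_single, pairing_single_right, pairing_single_left, Finsupp.smul_apply,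
        Finsupp.smul_apply, smul_eq_mul, smul_eq_mul, raise_apply_eq_lower_apply]
      ring

lemma lower_move {m : MayaDiagram} {p : ℤ} (hp : Movable m.1 (p - r) p) :
    lower r (m.move (p - r) p) = single m (X ^ hgtAt r m.1 p)
      + ∑ q ∈ m.removable r with q ≠ p - r ∧ q ≠ p + r,
          single ((m.move (p - r) p).move q (q - r)) (X ^ hgtAt r (moveBit m.1 (p - r) p) q) := by
  have hp' : p ∉ {q ∈ m.removable r | q ≠ p - r ∧ q ≠ p + r} := by
    simp [MayaDiagram.mem_removable, Movable, hp.2]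
  rw [lower, MayaDiagram.removable_move hp, sum_insert hp', MayaDiagram.coe_move]
  congr 2
  · exact Subtype.ext hp.moveBit_moveBit
  · congr 1
    simpa using hgtAt_moveBit hp r p

lemma raise_move {m : MayaDiagram} {q : ℤ} (hq : Movable m.1 q (q - r)) :
    raise r (m.move q (q - r)) = single m (X ^ hgtAt r m.1 q)
      + ∑ p ∈ m.addable r with p ≠ q - r ∧ p ≠ q + r,
          single ((m.move q (q - r)).move (p - r) p) (X ^ hgtAt r (moveBit m.1 q (q - r)) p) := by
  have hq' : q ∉ {p ∈ m.addable r | p ≠ q - r ∧ p ≠ q + r} := by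
    simp [MayaDiagram.mem_addable, Movable, hq.1]
  rw [raise, MayaDiagram.addable_move hq, sum_insert hq', MayaDiagram.coe_move]
  congr 2
  · exact Subtype.ext hq.moveBit_moveBit
  · congr 1
    simpa using hgtAt_moveBit hq r q

lemma addThenRemove_eq_removeThenAdd {m : MayaDiagram} {p q : ℤ} (hp : p ∈ m.addable r)
    (hq : q ∈ m.removable r) (hpq : p ≠ q - r) :
    addThenRemove r m p q = removeThenAdd r m q p := by
  rw [MayaDiagram.mem_addable] at hp
  rw [MayaDiagram.mem_removable] at hq
  have hne : p ≠ q := by rintro rfl; exact absurd (hp.2.symm.trans hq.1) zero_ne_one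
  rw [addThenRemove, removeThenAdd, hgtAt_add_hgtAt_moveBit hp hq]
  congr 1
  refine Subtype.ext ?_
  simp only [MayaDiagram.coe_move]
  exact moveBit_comm (by omega) hne hpq

lemma D_raise_eq_single_add (m : MayaDiagram) :
    D r (raise r m) = single m (∑ p ∈ m.addable r, X ^ (2 * hgtAt r m.1 p))
      + ∑ p ∈ m.addable r, ∑ q ∈ m.removable r with q ≠ p - r ∧ q ≠ p + r,
          addThenRemove r m p q := by
  rw [raise, map_sum, single_finsetSum, ← sum_add_distrib]
  refine sum_congr rfl fun p hp => ?_
  rw [D_single, lower_move (MayaDiagram.mem_addable.1 hp), smul_add, smul_single, smul_eq_mul,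
    ← pow_add, ← two_mul, Finset.smul_sum]
  simp only [smul_single, smul_eq_mul, ← pow_add, addThenRemove]

lemma U_lower_eq_single_add (m : MayaDiagram) :
    U r (lower r m) = single m (∑ q ∈ m.removable r, X ^ (2 * hgtAt r m.1 q))
      + ∑ q ∈ m.removable r, ∑ p ∈ m.addable r with p ≠ q - r ∧ p ≠ q + r,
          removeThenAdd r m q p := by
  rw [lower, map_sum, single_finsetSum, ← sum_add_distrib]
  refine sum_congr rfl fun q hq => ?_
  rw [U_single, raise_move (MayaDiagram.mem_removable.1 hq), smul_add, smul_single, smul_eq_mul,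
    ← pow_add, ← two_mul, Finset.smul_sum]
  simp only [smul_single, smul_eq_mul, ← pow_add, removeThenAdd]

lemma D_raise (m : MayaDiagram) :
    D r (raise r m) = U r (lower r m) + single m (evenGeomSum r) := by
  have hcross : ∑ p ∈ m.addable r, ∑ q ∈ m.removable r with q ≠ p - r ∧ q ≠ p + r,
      addThenRemove r m p q
        = ∑ q ∈ m.removable r, ∑ p ∈ m.addable r with p ≠ q - r ∧ p ≠ q + r,
            removeThenAdd r m q p := by
    rw [sum_comm' (t' := m.removable r) (s' := fun q => {p ∈ m.addable r | p ≠ q - r ∧ p ≠ q + r})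
      fun p q => by
        simp only [mem_filter]
        constructor
        · rintro ⟨hp, hq, h1, h2⟩
          exact ⟨⟨hp, by omega, by omega⟩, hq⟩
        · rintro ⟨⟨hp, h1, h2⟩, hq⟩
          exact ⟨hp, hq, by omega, by omega⟩]
    refine sum_congr rfl fun q hq => sum_congr rfl fun p hp => ?_
    obtain ⟨hp, hfar⟩ := mem_filter.1 hp
    exact addThenRemove_eq_removeThenAdd hp hq hfar.1
  rw [D_raise_eq_single_add, U_lower_eq_single_add,
    MayaDiagram.sum_addable_eq_sum_removable_add, single_add, hcross]
  abel

theorem D_comp_U : D r ∘ₗ U r = U r ∘ₗ D r + evenGeomSum r • LinearMap.id := by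
  refine lhom_ext fun m c => ?_
  simp only [LinearMap.comp_apply, LinearMap.add_apply, LinearMap.smul_apply, LinearMap.id_apply,
    U_single, D_single, map_smul, D_raise, smul_add, smul_single, smul_eq_mul, mul_comm]

lemma D_U_pow_succ {v : FockSpace} (hv : D r v = 0) (n : ℕ) :
    D r ((U r ^ (n + 1)) v) = ((n + 1 : ℕ) * evenGeomSum r) • (U r ^ n) v := by
  induction n with
  | zero => simpa [hv] using LinearMap.congr_fun (D_comp_U (r := r)) v
  | succ n ih =>
    rw [pow_succ', Module.End.mul_apply, ← LinearMap.comp_apply, D_comp_U, LinearMap.add_apply,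
      LinearMap.comp_apply, ih, map_smul, ← Module.End.mul_apply, ← pow_succ',
      LinearMap.smul_apply, LinearMap.id_apply, ← add_smul]
    congr 1
    push_cast
    ring

theorem pairing_U_pow_self {v : FockSpace} (hv : D r v = 0) (n : ℕ) :
    pairing ((U r ^ n) v) ((U r ^ n) v) = n ! * evenGeomSum r ^ n * pairing v v := by
  induction n with
  | zero => simp
  | succ n ih =>
    have hsucc : U r ((U r ^ n) v) = (U r ^ (n + 1)) v := by
      rw [pow_succ', Module.End.mul_apply]
    rw [← hsucc, pairing_U, hsucc, D_U_pow_succ hv, map_smul, ih, smul_eq_mul,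
      Nat.factorial_succ]
    push_cast
    ring

lemma pairing_single_single (m t : MayaDiagram) (c d : ℕ[X]) :
    pairing (single m c) (single t d) = if m = t then c * d else 0 := by
  rw [pairing_single_left]
  by_cases h : m = t
  · simp [h]
  · simp [h, single_eq_of_ne h]

lemma U_pow_single (n : ℕ) (m : MayaDiagram) :
    (U r ^ n) (single m 1)
      = ∑ σ ∈ ribbonChains r n m, single (σ (Fin.last n)) (X ^ chainHeight r n σ) := by
  induction n generalizing m with
  | zero => simp [ribbonChains, chainHeight]
  | succ n ih =>
    rw [pow_succ, Module.End.mul_apply, U_single, one_smul, raise, map_sum, ribbonChains,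
      sum_biUnion]
    swap
    · intro p hp p' hp' hne
      refine disjoint_left.2 fun σ hσ hσ' => hne ?_
      obtain ⟨τ, hτ, rfl⟩ := mem_image.1 hσ
      obtain ⟨τ', hτ', heq⟩ := mem_image.1 hσ'
      obtain rfl := Fin.cons_right_injective (α := fun _ => MayaDiagram) m heq
      have h0 := congrArg Subtype.val
        ((mem_ribbonChains.1 hτ).1.symm.trans (mem_ribbonChains.1 hτ').1)
      exact eq_of_moveBit_eq (MayaDiagram.mem_addable.1 hp).2 (MayaDiagram.mem_addable.1 hp').ne
        h0
    refine sum_congr rfl fun p hp => ?_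
    rw [sum_image fun _ _ _ _ h => Fin.cons_right_injective (α := fun _ => MayaDiagram) m h,
      ← smul_single_one, map_smul, ih, Finset.smul_sum]
    refine sum_congr rfl fun τ hτ => ?_
    rw [smul_single, smul_eq_mul, ← pow_add, chainHeight_cons, (mem_ribbonChains.1 hτ).1,
      MayaDiagram.coe_move, stepHeight_moveBit (MayaDiagram.mem_addable.1 hp), ← Fin.succ_last,
      Fin.cons_succ]

lemma pairing_U_pow_single (n : ℕ) (m : MayaDiagram) :
    pairing ((U r ^ n) (single m 1)) ((U r ^ n) (single m 1))
      = ∑ x ∈ chainPairs r n m, X ^ (chainHeight r n x.1 + chainHeight r n x.2) := by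
  simp only [chainPairs, U_pow_single, map_sum, LinearMap.sum_apply, pairing_single_single,
    ← pow_add, sum_filter, sum_product]
  exact sum_comm

end FockSpace

lemma sum_X_pow_div_two {ι : Type*} (F : Finset ι) (e : ι → ℕ) (P : ℕ[X])
    (h : ∑ i ∈ F, X ^ e i = expand ℕ 2 P) : ∑ i ∈ F, X ^ (e i / 2) = P := by
  -- An odd exponent would leave a positive odd coefficient: coefficients in `ℕ` cannot cancel.
  have heven : ∀ i ∈ F, 2 ∣ e i := by
    intro i hi
    by_contra hodd
    have hle : (X ^ e i : ℕ[X]).coeff (e i) ≤ (∑ j ∈ F, (X : ℕ[X]) ^ e j).coeff (e i) := by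
      rw [finsetSum_coeff]
      exact single_le_sum (f := fun j => (X ^ e j : ℕ[X]).coeff (e i)) (fun _ _ => Nat.zero_le _) hi
    rw [h, coeff_expand two_pos, if_neg hodd, coeff_X_pow_self] at hle
    exact absurd hle (by norm_num)
  apply expand_injective two_pos
  rw [← h, map_sum]
  refine sum_congr rfl fun i hi => ?_
  rw [map_pow, expand_X, ← pow_mul, Nat.mul_div_cancel' (heven i hi)]

theorem stmt9_general (r : ℕ) (γ : ℕ → ℕ) (hγ : IsPartition γ)
    (hcore : ∀ k : ℤ, ¬(edgeSeq γ (k - r) = 0 ∧ edgeSeq γ k = 1)) (n : ℕ) :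
    (∑ᶠ T ∈ {T : (Fin (n + 1) → ℕ → ℕ) × (Fin (n + 1) → ℕ → ℕ) |
        IsSRT r n γ T.1 ∧ IsSRT r n γ T.2 ∧ T.1 (Fin.last n) = T.2 (Fin.last n)},
      (Polynomial.X : Polynomial ℕ) ^ ((totH r n T.1 + totH r n T.2) / 2))
    = (n.factorial : Polynomial ℕ) *
        (∑ i ∈ Finset.range r, (Polynomial.X : Polynomial ℕ) ^ i) ^ n := by
  have hD : FockSpace.D r (Finsupp.single hγ.toMayaDiagram 1) = 0 := by
    have hempty : hγ.toMayaDiagram.removable r = ∅ := eq_empty_of_forall_notMem fun p hp =>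
      have h := MayaDiagram.mem_removable.1 hp
      hcore p ⟨h.2, h.1⟩
    rw [FockSpace.D_single, FockSpace.lower, hempty, sum_empty, smul_zero]
  have hsum := finsum_mem_eq_of_bijOn
    (f := fun x => (X : ℕ[X]) ^ ((chainHeight r n x.1 + chainHeight r n x.2) / 2))
    (g := fun T => (X : ℕ[X]) ^ ((totH r n T.1 + totH r n T.2) / 2))
    _ (bijOn_partitionChain hγ) fun x hx => by
      simp only [chainPairs, coe_filter, mem_product, Set.mem_ofPred_eq] at hx
      rw [(isSRT_partitionChain hγ hx.1.1).2, (isSRT_partitionChain hγ hx.1.2).2]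
  rw [← hsum, finsum_mem_coe_finset]
  apply sum_X_pow_div_two
  rw [← FockSpace.pairing_U_pow_single, FockSpace.pairing_U_pow_self hD,
    FockSpace.pairing_single_single, if_pos rfl, mul_one]
  simp [evenGeomSum, pow_mul]

/-- For an `r`-core `γ`: the sum over all partitions `λ` reachable from `γ` by `n`
`r`-ribbon additions of the square of the spin generating polynomial
`F^{λ/γ}(q^{1/2}) = Σ_T q^{spin T}` equals `n!·(1 + q + ⋯ + q^{r-1})^n`.
(Exponents are written as `(totH T₁ + totH T₂)/2 = spin T₁ + spin T₂`, which is an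
integer since the two tableaux have the same shape.) -/
theorem stmt9 (r : ℕ) (hr : 1 ≤ r) (γ : ℕ → ℕ) (hγ : IsPartition γ)
    (hcore : ∀ k : ℤ, ¬(edgeSeq γ (k - r) = 0 ∧ edgeSeq γ k = 1)) (n : ℕ) :
    (∑ᶠ T ∈ {T : (Fin (n + 1) → ℕ → ℕ) × (Fin (n + 1) → ℕ → ℕ) |
        IsSRT r n γ T.1 ∧ IsSRT r n γ T.2 ∧ T.1 (Fin.last n) = T.2 (Fin.last n)},
      (Polynomial.X : Polynomial ℕ) ^ ((totH r n T.1 + totH r n T.2) / 2))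
    = (n.factorial : Polynomial ℕ) *
        (∑ i ∈ Finset.range r, (Polynomial.X : Polynomial ℕ) ^ i) ^ n :=
  stmt9_general r γ hγ hcore n
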